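/- Let p_{A,B} and q_{A,B} be joint distributions on finite A × B with ||p_{A,B} - q_{A,B}||_1 ≤ 1/2, and let p_{B̂|B} be any channel from B to B̂ with |B̂| ≤ |B|. Define J(p_{A,B}, p_{B̂|B}) = I(A; B̂) computed under the joint distribution induced by the prior and the channel. Then |J(p_{A,B}, p_{B̂|B}) - J(q_{A,B}, p_{B̂|B})| ≤ 3 ||p_{A,B} - q_{A,B}||_1 · log(|A||B| / ||p_{A,B} - q_{A,B}||_1). -/

import Mathlib

/-!
Write `I(A;B̂) = H(A) + H(B̂) - H(A,B̂)` and compare the three entropies separately. Passing both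
priors through the same channel, and then marginalising, does not increase the L1 distance, so all
three pairs of distributions are `ε`-close, `ε = ‖p - q‖₁ ≤ 1/2`. Termwise,
`|η x - η y| ≤ η |x - y| + (1 - log 2) |x - y|` for `η t = -t log t` and `|x - y| ≤ 1/2`; summing
and applying Jensen to the concave `η` bounds the entropy difference on `n` points by
`ε log (n / ε) + (1 - log 2) ε`. With `n = |A|, |B̂|, |A||B̂|` and `|B̂| ≤ |B|` the three bounds add
up to at most `3 ε log (|A||B| / ε)` as soon as `|A|, |B̂| ≥ 2`; otherwise both mutual informations
vanish.
-/

open Finset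

/-- Mutual information of a joint distribution `r` on a finite product, given in curried form. -/
noncomputable def mi {A B : Type*} [Fintype A] [Fintype B] (r : A → B → ℝ) : ℝ :=
  ∑ a, ∑ b, r a b * Real.log (r a b / ((∑ b', r a b') * (∑ a', r a' b)))

open Real

lemma negMulLog_add_le {x y : ℝ} (hx : 0 ≤ x) (hy : 0 ≤ y) :
    negMulLog (x + y) ≤ negMulLog x + negMulLog y := by
  have hmul_log : ∀ {s t : ℝ}, 0 ≤ s → 0 ≤ t → s * log s ≤ s * log (s + t) := fun {s t} hs ht => by
    rcases hs.eq_or_lt with rfl | hs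
    · simp
    · exact mul_le_mul_of_nonneg_left (log_le_log hs (by linarith)) hs.le
  have h1 := hmul_log hx hy
  have h2 := hmul_log hy hx
  rw [add_comm y x] at h2
  simp only [negMulLog, neg_mul]
  linarith [add_mul x y (log (x + y))]

lemma negMulLog_sub_negMulLog_add_le {x d : ℝ} (hx : 0 ≤ x) (hd : 0 ≤ d) (h1 : x + d ≤ 1) :
    negMulLog x - negMulLog (x + d) ≤ d := by
  rcases hx.eq_or_lt with rfl | hx
  · have := negMulLog_nonneg hd (by simpa using h1)
    simp only [negMulLog_zero, zero_add]
    linarith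
  have hlog : x * (log (x + d) - log x) ≤ d := by
    rw [← log_div (by positivity) hx.ne']
    calc x * log ((x + d) / x) ≤ x * ((x + d) / x - 1) :=
          mul_le_mul_of_nonneg_left (log_le_sub_one_of_pos (by positivity)) hx.le
      _ = d := by field_simp; ring
  have hneg : d * log (x + d) ≤ 0 :=
    mul_nonpos_of_nonneg_of_nonpos hd (log_nonpos (by positivity) h1)
  simp only [negMulLog, neg_mul]
  nlinarith

lemma log_two_mul_le_negMulLog {d : ℝ} (hd : 0 ≤ d) (hd2 : d ≤ 1 / 2) :
    log 2 * d ≤ negMulLog d := by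
  rcases hd.eq_or_lt with rfl | hd
  · simp
  have : log 2 ≤ -log d := by
    rw [← log_inv]
    exact log_le_log (by norm_num) (by rw [le_inv_comm₀ (by norm_num) hd]; linarith)
  simp only [negMulLog, neg_mul]
  nlinarith

lemma abs_negMulLog_sub_le {x y : ℝ} (hx : x ∈ Set.Icc (0:ℝ) 1) (hy : y ∈ Set.Icc (0:ℝ) 1)
    (hxy : |x - y| ≤ 1 / 2) :
    |negMulLog x - negMulLog y| ≤ negMulLog |x - y| + (1 - log 2) * |x - y| := by
  wlog hle : x ≤ y generalizing x y
  · rw [abs_sub_comm, abs_sub_comm x] at *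
    exact this hy hx hxy (le_of_not_ge hle)
  obtain ⟨d, hd, rfl⟩ : ∃ d, 0 ≤ d ∧ y = x + d := ⟨y - x, by linarith, by ring⟩
  rw [show x - (x + d) = -d by ring, abs_neg, abs_of_nonneg hd] at *
  have hc : 0 ≤ (1 - log 2) * d := mul_nonneg (by linarith [log_two_lt_d9]) hd
  rw [abs_sub_le_iff]
  constructor
  · linarith [negMulLog_sub_negMulLog_add_le hx.1 hd hy.2, log_two_mul_le_negMulLog hd hxy]
  · linarith [negMulLog_add_le hx.1 hd]

lemma sum_negMulLog_le {ι : Type*} [Fintype ι] (d : ι → ℝ) (hd : ∀ i, 0 ≤ d i) :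
    ∑ i, negMulLog (d i) ≤ Fintype.card ι * negMulLog ((∑ i, d i) / Fintype.card ι) := by
  rcases isEmpty_or_nonempty ι with hι | hι
  · simp
  have hn : (0 : ℝ) < Fintype.card ι := by exact_mod_cast Fintype.card_pos
  have jensen := concaveOn_negMulLog.le_map_sum (t := univ) (w := fun _ => (Fintype.card ι : ℝ)⁻¹)
    (p := d) (fun _ _ => by positivity) (by simp [card_univ, hn.ne']) (fun i _ => hd i)
  simp only [smul_eq_mul, ← mul_sum] at jensen
  rw [inv_mul_eq_div, inv_mul_eq_div, div_le_iff₀' hn] at jensen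
  exact jensen

lemma mul_negMulLog_div {n δ : ℝ} (hn : 0 < n) (hδ : 0 ≤ δ) :
    n * negMulLog (δ / n) = δ * log (n / δ) := by
  rcases hδ.eq_or_lt with rfl | hδ
  · simp
  rw [negMulLog, log_div hδ.ne' hn.ne', log_div hn.ne' hδ.ne']
  field_simp
  ring

noncomputable def entropyModulus (n δ : ℝ) : ℝ := δ * log (n / δ) + (1 - log 2) * δ

lemma entropyModulus_monotoneOn {n : ℝ} : MonotoneOn (entropyModulus n) (Set.Icc 0 (n / 2)) := by
  rintro δ ⟨hδ, -⟩ ε ⟨-, hεn⟩ hδε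
  rcases (hδ.trans hδε).eq_or_lt with rfl | hε
  · rw [le_antisymm hδε hδ]
  have h2 : 2 ≤ n / ε := by rw [le_div_iff₀ hε]; linarith
  have hlog2 : log 2 ≤ log (n / ε) := log_le_log (by norm_num) h2
  rcases hδ.eq_or_lt with rfl | hδ
  · simp only [entropyModulus, zero_mul, mul_zero, add_zero]
    nlinarith
  have hsplit : log (n / δ) = log (n / ε) + log (ε / δ) := by
    rw [← log_mul (by positivity) (by positivity)]; congr 1; field_simp
  have hratio : δ * log (ε / δ) ≤ ε - δ := by
    calc δ * log (ε / δ) ≤ δ * (ε / δ - 1) :=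
          mul_le_mul_of_nonneg_left (log_le_sub_one_of_pos (by positivity)) hδ.le
      _ = ε - δ := by field_simp
  simp only [entropyModulus, hsplit]
  nlinarith [mul_le_mul_of_nonneg_right hlog2 (sub_nonneg.2 hδε)]

lemma entropyModulus_add_le {a b b' ε : ℝ} (hε : 0 ≤ ε) (ha : 2 ≤ a) (hb' : 2 ≤ b')
    (hb : b' ≤ b) :
    entropyModulus a ε + entropyModulus b' ε + entropyModulus (a * b') ε
      ≤ 3 * ε * log (a * b / ε) := by
  rcases hε.eq_or_lt with rfl | hε
  · simp [entropyModulus]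
  have hlog : ∀ {x : ℝ}, 2 ≤ x → log (x / ε) = log x - log ε := fun hx =>
    log_div (by linarith) hε.ne'
  have hla : log 2 ≤ log a := log_le_log (by norm_num) ha
  have hlb' : log 2 ≤ log b' := log_le_log (by norm_num) hb'
  have hlb : log b' ≤ log b := log_le_log (by linarith) hb
  have hkey : 2 * log a + 2 * log b' + 3 * (1 - log 2) ≤ 3 * log a + 3 * log b := by
    linarith [log_two_gt_d9]
  simp only [entropyModulus, hlog ha, hlog hb', hlog (by nlinarith : 2 ≤ a * b'),
    hlog (by nlinarith : 2 ≤ a * b), log_mul (by linarith : a ≠ 0) (by linarith : b ≠ 0),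
    log_mul (by linarith : a ≠ 0) (by linarith : b' ≠ 0)]
  nlinarith [mul_le_mul_of_nonneg_left hkey hε.le]

noncomputable def entropy {ι : Type*} [Fintype ι] (u : ι → ℝ) : ℝ := ∑ i, negMulLog (u i)

lemma abs_entropy_sub_le {ι : Type*} [Fintype ι] [Nonempty ι] {u v : ι → ℝ}
    (hu : u ∈ stdSimplex ℝ ι) (hv : v ∈ stdSimplex ℝ ι) {ε : ℝ}
    (hdist : ∑ i, |u i - v i| ≤ ε) (hε : ε ≤ 1 / 2) :
    |entropy u - entropy v| ≤ entropyModulus (Fintype.card ι) ε := by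
  set δ := ∑ i, |u i - v i|
  have hn : (1 : ℝ) ≤ Fintype.card ι := by exact_mod_cast Fintype.card_pos
  have hδ : 0 ≤ δ := sum_nonneg fun i _ => abs_nonneg _
  have hpoint : ∀ i, |u i - v i| ≤ 1 / 2 := fun i =>
    ((single_le_sum (fun j _ => abs_nonneg (u j - v j)) (mem_univ i)).trans hdist).trans hε
  calc |entropy u - entropy v|
      ≤ ∑ i, |negMulLog (u i) - negMulLog (v i)| := by
        rw [entropy, entropy, ← sum_sub_distrib]; exact abs_sum_le_sum_abs _ _
    _ ≤ ∑ i, (negMulLog |u i - v i| + (1 - log 2) * |u i - v i|) :=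
        sum_le_sum fun i _ => abs_negMulLog_sub_le (mem_Icc_of_mem_stdSimplex hu i)
          (mem_Icc_of_mem_stdSimplex hv i) (hpoint i)
    _ = ∑ i, negMulLog |u i - v i| + (1 - log 2) * δ := by rw [sum_add_distrib, mul_sum]
    _ ≤ Fintype.card ι * negMulLog (δ / Fintype.card ι) + (1 - log 2) * δ := by
        gcongr ?_ + _; exact sum_negMulLog_le _ fun i => abs_nonneg _
    _ = entropyModulus (Fintype.card ι) δ := by rw [mul_negMulLog_div (by linarith) hδ]; rfl
    _ ≤ entropyModulus (Fintype.card ι) ε :=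
        entropyModulus_monotoneOn ⟨hδ, by linarith⟩ ⟨hδ.trans hdist, by linarith⟩ hdist

lemma mi_eq_entropy {A B : Type*} [Fintype A] [Fintype B] (r : A → B → ℝ)
    (h0 : ∀ a b, 0 ≤ r a b) :
    mi r = entropy (fun a => ∑ b, r a b) + entropy (fun b => ∑ a, r a b)
      - entropy (Function.uncurry r) := by
  have hterm : ∀ a b, r a b * log (r a b / ((∑ b', r a b') * ∑ a', r a' b))
      = -negMulLog (r a b) - r a b * log (∑ b', r a b') - r a b * log (∑ a', r a' b) := by
    intro a b
    rcases (h0 a b).eq_or_lt with h | h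
    · simp [← h]
    have hrow : 0 < ∑ b', r a b' := h.trans_le (single_le_sum (fun i _ => h0 a i) (mem_univ b))
    have hcol : 0 < ∑ a', r a' b := h.trans_le (single_le_sum (fun i _ => h0 i b) (mem_univ a))
    rw [log_div h.ne' (by positivity), log_mul hrow.ne' hcol.ne', negMulLog]
    ring
  simp only [mi, entropy, hterm, sum_sub_distrib, Fintype.sum_prod_type,
    Function.uncurry_apply_pair]
  rw [sum_comm (f := fun a b => r a b * log (∑ a', r a' b))]
  simp only [← sum_mul, negMulLog, neg_mul, sum_neg_distrib]
  ring

lemma mi_eq_zero_of_subsingleton_left {A B : Type*} [Fintype A] [Fintype B] [Subsingleton A]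
    (r : A → B → ℝ) (h1 : ∑ a, ∑ b, r a b = 1) : mi r = 0 := by
  refine sum_eq_zero fun a _ => sum_eq_zero fun b _ => ?_
  rw [Fintype.sum_subsingleton (fun a => ∑ b, r a b) a] at h1
  rw [h1, Fintype.sum_subsingleton _ a, one_mul]
  rcases eq_or_ne (r a b) 0 with h | h <;> simp [h]

lemma mi_eq_zero_of_subsingleton_right {A B : Type*} [Fintype A] [Fintype B] [Subsingleton B]
    (r : A → B → ℝ) (h1 : ∑ a, ∑ b, r a b = 1) : mi r = 0 := by
  refine sum_eq_zero fun a _ => sum_eq_zero fun b _ => ?_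
  rw [sum_comm, Fintype.sum_subsingleton (fun b => ∑ a, r a b) b] at h1
  rw [h1, Fintype.sum_subsingleton _ b, mul_one]
  rcases eq_or_ne (r a b) 0 with h | h <;> simp [h]

section Joint

variable {A B : Type*} [Fintype A] [Fintype B]

lemma marginals_mem_stdSimplex {r : A → B → ℝ} (h0 : ∀ a b, 0 ≤ r a b)
    (h1 : ∑ a, ∑ b, r a b = 1) :
    (fun a => ∑ b, r a b) ∈ stdSimplex ℝ A ∧ (fun b => ∑ a, r a b) ∈ stdSimplex ℝ B ∧
      Function.uncurry r ∈ stdSimplex ℝ (A × B) :=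
  ⟨⟨fun a => sum_nonneg fun b _ => h0 a b, h1⟩,
    ⟨fun b => sum_nonneg fun a _ => h0 a b, by rwa [sum_comm]⟩,
    ⟨fun x => h0 x.1 x.2, by rwa [Fintype.sum_prod_type]⟩⟩

lemma sum_abs_marginal_sub_le (r s : A → B → ℝ) :
    ∑ a, |∑ b, r a b - ∑ b, s a b| ≤ ∑ a, ∑ b, |r a b - s a b| :=
  sum_le_sum fun a _ => by rw [← sum_sub_distrib]; exact abs_sum_le_sum_abs _ _

lemma abs_mi_sub_le [Nonempty A] [Nonempty B] {r s : A → B → ℝ}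
    (hr0 : ∀ a b, 0 ≤ r a b) (hr1 : ∑ a, ∑ b, r a b = 1)
    (hs0 : ∀ a b, 0 ≤ s a b) (hs1 : ∑ a, ∑ b, s a b = 1) {ε : ℝ}
    (hdist : ∑ a, ∑ b, |r a b - s a b| ≤ ε) (hε : ε ≤ 1 / 2) :
    |mi r - mi s| ≤ entropyModulus (Fintype.card A) ε + entropyModulus (Fintype.card B) ε
      + entropyModulus (Fintype.card A * Fintype.card B) ε := by
  obtain ⟨hrA, hrB, hrAB⟩ := marginals_mem_stdSimplex hr0 hr1
  obtain ⟨hsA, hsB, hsAB⟩ := marginals_mem_stdSimplex hs0 hs1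
  have hdistA := (sum_abs_marginal_sub_le r s).trans hdist
  have hdistB := (sum_abs_marginal_sub_le (fun b a => r a b) (fun b a => s a b)).trans
    (sum_comm.trans_le hdist)
  have hdistAB : ∑ x : A × B, |Function.uncurry r x - Function.uncurry s x| ≤ ε := by
    rwa [Fintype.sum_prod_type]
  have hA := abs_entropy_sub_le hrA hsA hdistA hε
  have hB := abs_entropy_sub_le hrB hsB hdistB hε
  have hAB := abs_entropy_sub_le hrAB hsAB hdistAB hε
  rw [Fintype.card_prod, Nat.cast_mul] at hAB
  rw [mi_eq_entropy r hr0, mi_eq_entropy s hs0]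
  rw [abs_le] at hA hB hAB ⊢
  constructor <;> linarith [hA.1, hA.2, hB.1, hB.2, hAB.1, hAB.2]

end Joint

section Channel

variable {A B Bh : Type*} [Fintype B] {W : B → Bh → ℝ}

/-- The joint distribution of `(A, B̂)`; `W b b̂` is `p(b̂|b)`. -/
def channelOutput (W : B → Bh → ℝ) (p : A → B → ℝ) : A → Bh → ℝ :=
  fun a bh => ∑ b, W b bh * p a b

lemma channelOutput_nonneg (hW0 : ∀ b bh, 0 ≤ W b bh) {p : A → B → ℝ} (hp0 : ∀ a b, 0 ≤ p a b)
    (a : A) (bh : Bh) : 0 ≤ channelOutput W p a bh :=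
  sum_nonneg fun b _ => mul_nonneg (hW0 b bh) (hp0 a b)

lemma sum_channelOutput [Fintype Bh] (hW1 : ∀ b, ∑ bh, W b bh = 1) (p : A → B → ℝ) (a : A) :
    ∑ bh, channelOutput W p a bh = ∑ b, p a b := by
  simp only [channelOutput]
  rw [sum_comm]
  simp only [← sum_mul, hW1, one_mul]

lemma sum_abs_channelOutput_sub_le [Fintype A] [Fintype Bh] (hW0 : ∀ b bh, 0 ≤ W b bh)
    (hW1 : ∀ b, ∑ bh, W b bh = 1) (p q : A → B → ℝ) :
    ∑ a, ∑ bh, |channelOutput W p a bh - channelOutput W q a bh| ≤ ∑ a, ∑ b, |p a b - q a b| :=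
  calc ∑ a, ∑ bh, |channelOutput W p a bh - channelOutput W q a bh|
      ≤ ∑ a, ∑ bh, channelOutput W (fun a b => |p a b - q a b|) a bh := by
        gcongr with a _ bh _
        simp only [channelOutput]
        rw [← sum_sub_distrib]
        refine (abs_sum_le_sum_abs _ _).trans_eq (sum_congr rfl fun b _ => ?_)
        rw [← mul_sub, abs_mul, abs_of_nonneg (hW0 b bh)]
    _ = ∑ a, ∑ b, |p a b - q a b| := by simp only [sum_channelOutput hW1]

end Channel

theorem stmt_2 {A B Bh : Type*} [Fintype A] [Fintype B] [Fintype Bh]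
    (p q : A → B → ℝ) (W : B → Bh → ℝ)
    (hp0 : ∀ a b, 0 ≤ p a b) (hq0 : ∀ a b, 0 ≤ q a b)
    (hp1 : ∑ a, ∑ b, p a b = 1) (hq1 : ∑ a, ∑ b, q a b = 1)
    (hW0 : ∀ b bh, 0 ≤ W b bh) (hW1 : ∀ b, ∑ bh, W b bh = 1)
    (hcard : Fintype.card Bh ≤ Fintype.card B)
    (hdist : ∑ a, ∑ b, |p a b - q a b| ≤ 1 / 2) :
    |mi (fun a bh => ∑ b, W b bh * p a b) - mi (fun a bh => ∑ b, W b bh * q a b)|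
      ≤ 3 * (∑ a, ∑ b, |p a b - q a b|) *
        Real.log ((Fintype.card A * Fintype.card B : ℝ) / (∑ a, ∑ b, |p a b - q a b|)) := by
  change |mi (channelOutput W p) - mi (channelOutput W q)| ≤ _
  set ε := ∑ a, ∑ b, |p a b - q a b|
  have hε : 0 ≤ ε := sum_nonneg fun a _ => sum_nonneg fun b _ => abs_nonneg _
  have hp1' : ∑ a, ∑ bh, channelOutput W p a bh = 1 := by simp only [sum_channelOutput hW1, hp1]
  have hq1' : ∑ a, ∑ bh, channelOutput W q a bh = 1 := by simp only [sum_channelOutput hW1, hq1]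
  obtain ⟨a, -, hpa⟩ := exists_ne_zero_of_sum_ne_zero (hp1.trans_ne one_ne_zero)
  obtain ⟨b, -⟩ := exists_ne_zero_of_sum_ne_zero hpa
  have hRHS : 0 ≤ 3 * ε * log ((Fintype.card A * Fintype.card B : ℝ) / ε) := by
    have hA1 : (1 : ℝ) ≤ Fintype.card A := by exact_mod_cast Fintype.card_pos_iff.2 ⟨a⟩
    have hB1 : (1 : ℝ) ≤ Fintype.card B := by exact_mod_cast Fintype.card_pos_iff.2 ⟨b⟩
    rcases hε.eq_or_lt with h | h
    · simp [← h]
    exact mul_nonneg (by positivity) (log_nonneg (by rw [le_div_iff₀ h]; nlinarith))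
  rcases subsingleton_or_nontrivial A with hA | hA
  · rw [mi_eq_zero_of_subsingleton_left _ hp1', mi_eq_zero_of_subsingleton_left _ hq1']
    simpa using hRHS
  rcases subsingleton_or_nontrivial Bh with hBh | hBh
  · rw [mi_eq_zero_of_subsingleton_right _ hp1', mi_eq_zero_of_subsingleton_right _ hq1']
    simpa using hRHS
  exact (abs_mi_sub_le (channelOutput_nonneg hW0 hp0) hp1' (channelOutput_nonneg hW0 hq0) hq1'
      (sum_abs_channelOutput_sub_le hW0 hW1 p q) hdist).trans
    (entropyModulus_add_le hε (by exact_mod_cast Fintype.one_lt_card)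
      (by exact_mod_cast Fintype.one_lt_card) (by exact_mod_cast hcard))
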